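/- arXiv:1805.01311 — 2 statements merged into one kernel-verified Lean document; each statement's English description precedes it below -/
import Mathlib

section
/- Let G be an HRLQ instance, and suppose M1 is a matching of G that is stable in the instance G1 and satisfies |M1(h)| = q⁻(h) for every hospital h. Let M2 be a stable matching of the instance G' defined from M1. Then M = M1 ∪ M2 is a matching of G (every resident is matched to at most one hospital and |M(h)| ≤ q⁺(h) for every hospital h) and M is feasible (|M(h)| ≥ q⁻(h) for every hospital h). -/
open scoped Classical

/-- An HRLQ instance on residents `R` and hospitals `H`: an edge set (acceptability
relation), strict preference relations of residents over hospitals and of hospitals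
over residents (strict, transitive, total over neighbors), and lower/upper quotas. -/
structure HRLQ (R H : Type) where
  E : Finset (R × H)
  /-- `rp r h h'` : resident `r` strictly prefers hospital `h` over `h'`. -/
  rp : R → H → H → Prop
  /-- `hp h r r'` : hospital `h` strictly prefers resident `r` over `r'`. -/
  hp : H → R → R → Prop
  lq : H → ℕ
  uq : H → ℕ
  lq_le_uq : ∀ h, lq h ≤ uq h
  uq_pos : ∀ h, 1 ≤ uq h
  rp_irrefl : ∀ r h, ¬ rp r h h
  rp_trans : ∀ r h₁ h₂ h₃, rp r h₁ h₂ → rp r h₂ h₃ → rp r h₁ h₃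
  rp_total : ∀ r h₁ h₂, (r, h₁) ∈ E → (r, h₂) ∈ E → h₁ ≠ h₂ → rp r h₁ h₂ ∨ rp r h₂ h₁
  hp_irrefl : ∀ h r, ¬ hp h r r
  hp_trans : ∀ h r₁ r₂ r₃, hp h r₁ r₂ → hp h r₂ r₃ → hp h r₁ r₃
  hp_total : ∀ h r₁ r₂, (r₁, h) ∈ E → (r₂, h) ∈ E → r₁ ≠ r₂ → hp h r₁ r₂ ∨ hp h r₂ r₁

namespace HRLQ

variable {R H : Type} [Fintype R] [Fintype H] [DecidableEq R] [DecidableEq H]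

/-- `M(h)`: the set of residents assigned to hospital `h` by `M`.
A matching is represented as a function `M : R → Option H` assigning to each resident
at most one hospital (`none` = unmatched). -/
noncomputable def assigned (M : R → Option H) (h : H) : Finset R :=
  Finset.univ.filter fun r => M r = some h

/-- `M` is a matching with respect to edge set `E` and upper quotas `q`:
every matched pair is an edge and no hospital exceeds its upper quota.
(Each resident is matched to at most one hospital by the functional representation.) -/
def IsMatchingIn (E : Finset (R × H)) (q : H → ℕ) (M : R → Option H) : Prop :=
  (∀ r h, M r = some h → (r, h) ∈ E) ∧ ∀ h, (assigned M h).card ≤ q h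

/-- `M` is a matching of the instance `G`. -/
def IsMatching (G : HRLQ R H) (M : R → Option H) : Prop :=
  IsMatchingIn G.E G.uq M

/-- `M` is a feasible matching of `G`: a matching meeting all lower quotas. -/
def Feasible (G : HRLQ R H) (M : R → Option H) : Prop :=
  IsMatching G M ∧ ∀ h, G.lq h ≤ (assigned M h).card

/-- Resident `r` is unmatched in `M` or prefers `h` over `M(r)`. -/
def WantsMore (G : HRLQ R H) (M : R → Option H) (r : R) (h : H) : Prop :=
  ∀ h', M r = some h' → G.rp r h h'

/-- The pair `(r,h)` blocks `M`, with respect to edge set `E` and upper quotas `q`. -/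
def BlocksIn (G : HRLQ R H) (E : Finset (R × H)) (q : H → ℕ)
    (M : R → Option H) (r : R) (h : H) : Prop :=
  (r, h) ∈ E ∧ M r ≠ some h ∧ WantsMore G M r h ∧
    ((assigned M h).card < q h ∨ ∃ r' ∈ assigned M h, G.hp h r r')

/-- The pair `(r,h)` blocks `M` in the instance `G`. -/
def Blocks (G : HRLQ R H) (M : R → Option H) (r : R) (h : H) : Prop :=
  BlocksIn G G.E G.uq M r h

/-- `M` is stable in `G`: no blocking pair. -/
def Stable (G : HRLQ R H) (M : R → Option H) : Prop :=
  ∀ r h, ¬ Blocks G M r h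

/-- Resident `r` has justified envy toward `r'` (matched to some hospital `h`) w.r.t. `M`. -/
def JustifiedEnvy (G : HRLQ R H) (M : R → Option H) (r r' : R) : Prop :=
  ∃ h, M r' = some h ∧ (r, h) ∈ G.E ∧ G.hp h r r' ∧ WantsMore G M r h

/-- `M` is envy-free: no resident has justified envy toward another. -/
def EnvyFree (G : HRLQ R H) (M : R → Option H) : Prop :=
  ∀ r r', ¬ JustifiedEnvy G M r r'

/-- `M` is a maximal envy-free matching of `G`: it is envy-free, and for every edge
`(r,h) ∈ E \ M`, `M ∪ {(r,h)}` is not an envy-free matching (either it is not a valid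
matching, or it is not envy-free). -/
def MaximalEnvyFree (G : HRLQ R H) (M : R → Option H) : Prop :=
  EnvyFree G M ∧ ∀ r h, (r, h) ∈ G.E → M r ≠ some h →
    ¬ (M r = none ∧ IsMatching G (Function.update M r (some h)) ∧
        EnvyFree G (Function.update M r (some h)))

/-- `r'` is a candidate threshold resident for `h` w.r.t. `M1`: a neighbor of `h`
that is matched in `M1` and prefers `h` over its `M1`-partner. -/
def ThresholdCand (G : HRLQ R H) (M1 : R → Option H) (h : H) (r' : R) : Prop :=
  (r', h) ∈ G.E ∧ ∃ h', M1 r' = some h' ∧ G.rp r' h h'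

/-- `rho` is the threshold resident of `h` w.r.t. `M1` (`none` encodes the dummy
resident used when no candidate exists): the candidate most preferred by `h`. -/
def IsThreshold (G : HRLQ R H) (M1 : R → Option H) (h : H) : Option R → Prop
  | none => ∀ r', ¬ ThresholdCand G M1 h r'
  | some rh => ThresholdCand G M1 h rh ∧
      ∀ r', ThresholdCand G M1 h r' → r' ≠ rh → G.hp h rh r'

/-- `h` prefers `r` over the threshold resident `rho` (`none` = dummy resident,
less preferred by `h` than any neighbor). -/
def PrefThreshold (G : HRLQ R H) (h : H) : Option R → R → Prop
  | none, _ => True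
  | some rh, r => G.hp h r rh

/-- The edge set `E'` of the reduced instance `G'` built from `M1` and the threshold
residents `rho`: edges `(r,h) ∈ E` with `r` unmatched in `M1` (i.e. `r ∈ R'`),
`h` under-subscribed (i.e. `h ∈ H'`), and `h` preferring `r` over its threshold resident. -/
noncomputable def Ered (G : HRLQ R H) (M1 : R → Option H) (rho : H → Option R) :
    Finset (R × H) :=
  G.E.filter fun p =>
    M1 p.1 = none ∧ (assigned M1 p.2).card < G.uq p.2 ∧
      PrefThreshold G p.2 (rho p.2) p.1

/-- The upper quotas of the reduced instance `G'`. -/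
def qred (G : HRLQ R H) : H → ℕ := fun h => G.uq h - G.lq h

/-- The union `M1 ∪ M2` of two matchings (with disjoint sets of matched residents). -/
def munion (M1 M2 : R → Option H) : R → Option H := fun r =>
  match M1 r with
  | some h => some h
  | none => M2 r

/-- The vote of resident `r` comparing assignment `a` (in `M`) with `b` (in `M'`):
`1` if `r` prefers `a`, `-1` if `r` prefers `b`, `0` otherwise; being unmatched is
less preferred than being matched to any neighbor. -/
noncomputable def rvote (G : HRLQ R H) (r : R) (a b : Option H) : ℤ :=
  if a = b then 0
  else
    match a, b with
    | none, _ => -1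
    | _, none => 1
    | some h, some h' => if G.rp r h h' then 1 else if G.rp r h' h then -1 else 0

/-- `P` encodes a legal correspondence `corr_h` for hospital `h` comparing `M` with `M'`:
a pairing of `M(h) \ M'(h)` with `M'(h) \ M(h)` (unpaired residents being paired with
distinct dummy residents after padding both sides to size `q⁺(h)`). -/
def IsCorr (G : HRLQ R H) (M M' : R → Option H) (h : H) (P : Finset (R × R)) : Prop :=
  (∀ p ∈ P, p.1 ∈ assigned M h \ assigned M' h ∧ p.2 ∈ assigned M' h \ assigned M h) ∧
  (∀ p ∈ P, ∀ q ∈ P, (p.1 = q.1 ∨ p.2 = q.2) → p = q) ∧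
  (assigned M h \ assigned M' h).card + (assigned M' h \ assigned M h).card - P.card
    ≤ G.uq h

/-- The total vote of hospital `h` comparing `M` with `M'` under the correspondence `P`
(positive contributions favor `M`): paired residents are compared by `h`'s preference;
a resident of `M(h) \ M'(h)` paired with a dummy contributes `+1`; a dummy paired with a
resident of `M'(h) \ M(h)` contributes `-1`; dummy-dummy pairs contribute `0`. -/
noncomputable def hvote (G : HRLQ R H) (M M' : R → Option H) (h : H)
    (P : Finset (R × R)) : ℤ :=
  (∑ p ∈ P, if G.hp h p.1 p.2 then (1 : ℤ) else -1)
    + (((assigned M h \ assigned M' h).card - P.card : ℕ) : ℤ)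
    - (((assigned M' h \ assigned M h).card - P.card : ℕ) : ℤ)

/-- The total vote of all residents and hospitals comparing `M` with `M'` under the
correspondences `P`; positive values favor `M`, negative values favor `M'`. -/
noncomputable def totalVote (G : HRLQ R H) (M M' : R → Option H)
    (P : H → Finset (R × R)) : ℤ :=
  (∑ r, rvote G r (M r) (M' r)) + ∑ h, hvote G M M' h (P h)

/-- `M'` is more popular than `M` with respect to the chosen correspondences `P`. -/
def MorePopular (G : HRLQ R H) (M' M : R → Option H) (P : H → Finset (R × R)) : Prop :=
  totalVote G M M' P < 0

/-- `M` is a feasible matching popular amongst the set of feasible matchings: no feasible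
matching `M'` is more popular than `M` under any choice of correspondences. -/
def PopularAmongFeasible (G : HRLQ R H) (M : R → Option H) : Prop :=
  Feasible G M ∧ ∀ M' P, Feasible G M' → (∀ h, IsCorr G M M' h (P h)) →
    ¬ MorePopular G M' M P

/-- `M` is a popular matching: no matching `M'` is more popular than `M` under any
choice of correspondences. -/
def Popular (G : HRLQ R H) (M : R → Option H) : Prop :=
  IsMatching G M ∧ ∀ M' P, IsMatching G M' → (∀ h, IsCorr G M M' h (P h)) →
    ¬ MorePopular G M' M P

/-- The size of a matching: the number of matched residents. -/
noncomputable def msize (M : R → Option H) : ℕ :=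
  (Finset.univ.filter fun r => M r ≠ none).card

/-- Resident `r` is matched in `M` to its rank-1 (most preferred) hospital. -/
def Rank1 (G : HRLQ R H) (M : R → Option H) (r : R) : Prop :=
  ∃ h, M r = some h ∧ ∀ h', (r, h') ∈ G.E → h' ≠ h → G.rp r h h'

/-- The number of residents matched to their rank-1 hospital in `M`. -/
noncomputable def rank1Count (G : HRLQ R H) (M : R → Option H) : ℕ :=
  (Finset.univ.filter fun r => Rank1 G M r).card

/-- The number of residents who prefer their assignment in `M` over that in `M'`. -/
noncomputable def prefCount (G : HRLQ R H) (M M' : R → Option H) : ℕ :=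
  (Finset.univ.filter fun r => rvote G r (M r) (M' r) = 1).card

end HRLQ

/-! Every edge of `G'` has its resident unmatched in `M1`, so `M1` and `M2` match disjoint sets of
residents and their union is a matching in which each hospital receives exactly `q⁻(h)` residents
from `M1` and at most `q⁺(h) - q⁻(h)` from `M2`. -/

namespace HRLQ

theorem munion_eq_some_iff {R H : Type} {M1 M2 : R → Option H} {r : R} {h : H} :
    munion M1 M2 r = some h ↔ M1 r = some h ∨ M1 r = none ∧ M2 r = some h := by
  unfold munion
  cases M1 r <;> simp

variable {R H : Type} [Fintype R] [DecidableEq H]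

theorem assigned_subset_assigned_munion (M1 M2 : R → Option H) (h : H) :
    assigned M1 h ⊆ assigned (munion M1 M2) h := by
  intro r hr
  simp only [assigned, Finset.mem_filter, Finset.mem_univ, true_and] at hr ⊢
  exact munion_eq_some_iff.2 (Or.inl hr)

theorem assigned_munion {M1 M2 : R → Option H}
    (hdisj : ∀ r h, M2 r = some h → M1 r = none) (h : H) :
    assigned (munion M1 M2) h = assigned M1 h ∪ assigned M2 h := by
  ext r
  simp only [assigned, Finset.mem_filter, Finset.mem_univ, true_and, Finset.mem_union,
    munion_eq_some_iff]
  exact ⟨Or.imp_right And.right, Or.imp_right fun h2 => ⟨hdisj r h h2, h2⟩⟩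

theorem card_assigned_munion {M1 M2 : R → Option H}
    (hdisj : ∀ r h, M2 r = some h → M1 r = none) (h : H) :
    (assigned (munion M1 M2) h).card = (assigned M1 h).card + (assigned M2 h).card := by
  rw [assigned_munion hdisj, Finset.card_union_of_disjoint]
  rw [Finset.disjoint_left]
  intro r h1 h2
  simp only [assigned, Finset.mem_filter, Finset.mem_univ, true_and] at h1 h2
  simp [hdisj r h h2] at h1

theorem IsMatchingIn.mono {E E' : Finset (R × H)} {q q' : H → ℕ} {M : R → Option H}
    (hM : IsMatchingIn E q M) (hE : E ⊆ E') (hq : ∀ h, q h ≤ q' h) :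
    IsMatchingIn E' q' M :=
  ⟨fun r h hr => hE (hM.1 r h hr), fun h => (hM.2 h).trans (hq h)⟩

theorem IsMatchingIn.munion {E : Finset (R × H)} {q1 q2 : H → ℕ} {M1 M2 : R → Option H}
    (hM1 : IsMatchingIn E q1 M1) (hM2 : IsMatchingIn E q2 M2)
    (hdisj : ∀ r h, M2 r = some h → M1 r = none) :
    IsMatchingIn E (q1 + q2) (HRLQ.munion M1 M2) := by
  refine ⟨fun r h hr => ?_, fun h => ?_⟩
  · rcases munion_eq_some_iff.1 hr with h1 | ⟨-, h2⟩
    exacts [hM1.1 r h h1, hM2.1 r h h2]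
  · rw [card_assigned_munion hdisj, Pi.add_apply]
    exact Nat.add_le_add (hM1.2 h) (hM2.2 h)

theorem Ered_subset (G : HRLQ R H) (M1 : R → Option H) (rho : H → Option R) :
    Ered G M1 rho ⊆ G.E :=
  Finset.filter_subset _ _

theorem eq_none_of_mem_Ered {G : HRLQ R H} {M1 : R → Option H} {rho : H → Option R}
    {r : R} {h : H} (hrh : (r, h) ∈ Ered G M1 rho) : M1 r = none :=
  (Finset.mem_filter.1 hrh).2.1

end HRLQ

theorem statement1_general {R H : Type} [Fintype R] [DecidableEq H]
    (G : HRLQ R H) (M1 M2 : R → Option H) (rho : H → Option R)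
    (hM1 : HRLQ.IsMatching G M1)
    (hM1full : ∀ h, (HRLQ.assigned M1 h).card = G.lq h)
    (hM2 : HRLQ.IsMatchingIn (HRLQ.Ered G M1 rho) (HRLQ.qred G) M2) :
    HRLQ.IsMatching G (HRLQ.munion M1 M2) ∧
      ∀ h, G.lq h ≤ (HRLQ.assigned (HRLQ.munion M1 M2) h).card := by
  have hdisj : ∀ r h, M2 r = some h → M1 r = none :=
    fun r h hr => HRLQ.eq_none_of_mem_Ered (hM2.1 r h hr)
  have hM1lq : HRLQ.IsMatchingIn G.E G.lq M1 := ⟨hM1.1, fun h => (hM1full h).le⟩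
  have hM2E : HRLQ.IsMatchingIn G.E (HRLQ.qred G) M2 :=
    hM2.mono (HRLQ.Ered_subset G M1 rho) fun _ => le_rfl
  refine ⟨(hM1lq.munion hM2E hdisj).mono subset_rfl fun h => ?_, fun h => ?_⟩
  · exact (Nat.add_sub_cancel' (G.lq_le_uq h)).le
  · exact hM1full h ▸ Finset.card_le_card (HRLQ.assigned_subset_assigned_munion M1 M2 h)

/-- If `M1` is a matching of `G` that is stable in `G1` and fills every
lower quota exactly, and `M2` is a stable matching of the reduced instance `G'`, then
`M = M1 ∪ M2` is a matching of `G` (each resident gets at most one hospital, each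
hospital `h` at most `q⁺(h)` residents) and `M` is feasible (`|M(h)| ≥ q⁻(h)`). -/
theorem statement1 {R H : Type} [Fintype R] [Fintype H] [DecidableEq R] [DecidableEq H]
    (G : HRLQ R H) (M1 M2 : R → Option H) (rho : H → Option R)
    (hM1 : HRLQ.IsMatching G M1)
    (hM1stab : ∀ r h, ¬ HRLQ.BlocksIn G G.E G.lq M1 r h)
    (hM1full : ∀ h, (HRLQ.assigned M1 h).card = G.lq h)
    (hrho : ∀ h, (HRLQ.assigned M1 h).card < G.uq h → HRLQ.IsThreshold G M1 h (rho h))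
    (hM2 : HRLQ.IsMatchingIn (HRLQ.Ered G M1 rho) (HRLQ.qred G) M2)
    (hM2stab : ∀ r h, ¬ HRLQ.BlocksIn G (HRLQ.Ered G M1 rho) (HRLQ.qred G) M2 r h) :
    HRLQ.IsMatching G (HRLQ.munion M1 M2) ∧
      ∀ h, G.lq h ≤ (HRLQ.assigned (HRLQ.munion M1 M2) h).card :=
  statement1_general G M1 M2 rho hM1 hM1full hM2
end

section
/- There exists an HR instance in which every hospital has upper quota 1, together with a stable matching M_s and a popular matching M_p with |M_p| > |M_s|, such that strictly more residents are matched to their rank-1 hospital in M_s than in M_p, and strictly more residents prefer their assignment in M_s over their assignment in M_p than prefer their assignment in M_p over their assignment in M_s. -/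
open scoped Classical

/-!
The instance has two components. On the path `r₁ – h₀ – r₀ – h₁`, where `r₀` and `h₀` rank each
other first, every stable matching contains `r₀h₀` and so leaves `r₁` and `h₁` single, whereas
the perfect matching `{r₀h₁, r₁h₀}` is popular: the two votes won by `r₀h₀` are cancelled by the
two lost by `r₁` and `h₁`. On the 4-cycle `r₂, r₃, h₂, h₃` with opposed preferences, the stable
matching gives both residents their first choice and the popular one both hospitals theirs.

Popularity is certified by vertex weights of total weight `≤ 0` that compensate the vote of every
vertex left single and of every edge a rival matching may use; summing over the edges and single
vertices of the rival bounds its advantage by `0`. With unit quotas the correspondence `corr_h`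
is forced, so each hospital votes like a resident.
-/

theorem Option.apply_eq_ite_add_sum {β M : Type*} [Fintype β] [DecidableEq β] [AddCommMonoid M]
    (F : Option β → M) (o : Option β) :
    F o = (if o = none then F none else 0) + ∑ b, if o = some b then F (some b) else 0 := by
  cases o <;> simp

theorem Finset.sum_apply_add_sum_apply_nonneg {R H M : Type*} [Fintype R] [Fintype H]
    [DecidableEq R] [DecidableEq H] [AddCommMonoid M] [PartialOrder M] [IsOrderedAddMonoid M]
    {σ : R → Option H} {τ : H → Option R} (hστ : ∀ h r, τ h = some r ↔ σ r = some h)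
    (f : R → Option H → M) (g : H → Option R → M)
    (hf : ∀ r, 0 ≤ f r none) (hg : ∀ h, 0 ≤ g h none)
    (hfg : ∀ r h, σ r = some h → 0 ≤ f r (some h) + g h (some r)) :
    0 ≤ ∑ r, f r (σ r) + ∑ h, g h (τ h) := by
  have hsplit : ∑ r, f r (σ r) + ∑ h, g h (τ h) =
      ∑ r, (if σ r = none then f r none else 0) + ∑ h, (if τ h = none then g h none else 0)
        + ∑ r, ∑ h, ((if σ r = some h then f r (some h) else 0)
          + if σ r = some h then g h (some r) else 0) := by
    rw [Finset.sum_congr rfl fun r _ => Option.apply_eq_ite_add_sum (f r) (σ r),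
      Finset.sum_congr rfl fun h _ => Option.apply_eq_ite_add_sum (g h) (τ h)]
    simp only [hστ, Finset.sum_add_distrib]
    rw [Finset.sum_comm (γ := H)]
    abel
  rw [hsplit]
  refine add_nonneg (add_nonneg ?_ ?_) ?_
  · exact Finset.sum_nonneg fun r _ => by split_ifs <;> simp [hf]
  · exact Finset.sum_nonneg fun h _ => by split_ifs <;> simp [hg]
  · refine Finset.sum_nonneg fun r _ => Finset.sum_nonneg fun h _ => ?_
    split_ifs with hrh
    · exact hfg r h hrh
    · simp

namespace HRLQ

section Vote

variable {α : Type*} [DecidableEq α]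

def vote (pref : α → α → Prop) [DecidableRel pref] (a b : Option α) : ℤ :=
  if a = b then 0
  else
    match a, b with
    | none, _ => -1
    | _, none => 1
    | some x, some y => if pref x y then 1 else if pref y x then -1 else 0

theorem vote_some_some_of_ne (pref : α → α → Prop) [DecidableRel pref] {x y : α}
    (hxy : x ≠ y) (htotal : pref x y ∨ pref y x) :
    vote pref (some x) (some y) = if pref x y then 1 else -1 := by
  by_cases h : pref x y <;> simp_all [vote]

end Vote

variable {R H : Type}

theorem rvote_eq_vote [DecidableEq H] (G : HRLQ R H) (r : R) [DecidableRel (G.rp r)]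
    (a b : Option H) : rvote G r a b = vote (G.rp r) a b := by
  unfold rvote vote
  congr with x y
  congr

instance [Fintype H] [DecidableEq R] [DecidableEq H] (G : HRLQ R H) [∀ r, DecidableRel (G.rp r)]
    (M : R → Option H) : DecidablePred (Rank1 G M) := fun r =>
  inferInstanceAs (Decidable (∃ h, M r = some h ∧ ∀ h', (r, h') ∈ G.E → h' ≠ h → G.rp r h h'))

section Assigned

variable [Fintype R] [DecidableEq H]

theorem mem_assigned {M : R → Option H} {h : H} {r : R} : r ∈ assigned M h ↔ M r = some h := by
  simp [assigned]

theorem exists_assigned_eq_toFinset {G : HRLQ R H} {M : R → Option H} (hM : IsMatching G M)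
    {h : H} (hq : G.uq h = 1) : ∃ o : Option R, assigned M h = o.toFinset := by
  have hle : (assigned M h).card ≤ 1 := hq ▸ hM.2 h
  rcases Nat.le_one_iff_eq_zero_or_eq_one.mp hle with h0 | h1
  · exact ⟨none, Finset.card_eq_zero.mp h0⟩
  · obtain ⟨r, hr⟩ := Finset.card_eq_one.mp h1
    exact ⟨some r, hr⟩

end Assigned

theorem hvote_eq_vote [Fintype R] [DecidableEq R] [DecidableEq H] (G : HRLQ R H) {h : H}
    [DecidableRel (G.hp h)] (hq : G.uq h = 1) {M M' : R → Option H} (hM : IsMatching G M)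
    (hM' : IsMatching G M') {a b : Option R} (ha : assigned M h = a.toFinset)
    (hb : assigned M' h = b.toFinset) {P : Finset (R × R)} (hP : IsCorr G M M' h P) :
    hvote G M M' h P = vote (G.hp h) a b := by
  obtain ⟨hPmem, -, hPcard⟩ := hP
  unfold hvote
  rw [ha, hb] at hPmem hPcard ⊢
  have hP0 : (a.toFinset \ b.toFinset = ∅ ∨ b.toFinset \ a.toFinset = ∅) → P = ∅ := by
    rintro (he | he) <;>
      exact Finset.eq_empty_of_forall_notMem fun p hp => by simpa [he] using hPmem p hp
  rcases a with _ | x <;> rcases b with _ | y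
  · simp [hP0 (by simp), vote]
  · simp [hP0 (by simp), vote]
  · simp [hP0 (by simp), vote]
  by_cases hxy : x = y
  · subst hxy
    simp [hP0 (by simp), vote]
  have hsdiff : ({x} : Finset R) \ {y} = {x} ∧ ({y} : Finset R) \ {x} = {y} :=
    ⟨Finset.sdiff_eq_self_of_disjoint (Finset.disjoint_singleton.mpr hxy),
      Finset.sdiff_eq_self_of_disjoint (Finset.disjoint_singleton.mpr (Ne.symm hxy))⟩
  have hPxy : P = {(x, y)} := by
    refine Finset.eq_of_subset_of_card_le (fun p hp => ?_) ?_
    · have := hPmem p hp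
      simp_all [Prod.ext_iff]
    · simp_all only [Option.toFinset_some, Finset.card_singleton]
      omega
  have hedge : ∀ {N : R → Option H} {z : Option R}, IsMatching G N →
      assigned N h = z.toFinset → ∀ w ∈ z, (w, h) ∈ G.E := fun hN hz w hw =>
    hN.1 w h (mem_assigned.mp (hz ▸ Option.mem_toFinset.mpr hw))
  rw [vote_some_some_of_ne _ hxy
    (G.hp_total h x y (hedge hM ha x rfl) (hedge hM' hb y rfl) hxy)]
  simp [hPxy, hsdiff]

theorem totalVote_eq_sum_vote [Fintype R] [Fintype H] [DecidableEq R] [DecidableEq H]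
    (G : HRLQ R H) (hq : ∀ h, G.uq h = 1) [∀ r, DecidableRel (G.rp r)]
    [∀ h, DecidableRel (G.hp h)] {M M' : R → Option H} (hM : IsMatching G M)
    (hM' : IsMatching G M') {μ μ' : H → Option R} (hμ : ∀ h, assigned M h = (μ h).toFinset)
    (hμ' : ∀ h, assigned M' h = (μ' h).toFinset) {P : H → Finset (R × R)}
    (hP : ∀ h, IsCorr G M M' h (P h)) :
    totalVote G M M' P = ∑ r, vote (G.rp r) (M r) (M' r) + ∑ h, vote (G.hp h) (μ h) (μ' h) := by
  simp only [totalVote, rvote_eq_vote, hvote_eq_vote G (hq _) hM hM' (hμ _) (hμ' _) (hP _)]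

theorem popular_of_certificate [Fintype R] [Fintype H] [DecidableEq R] [DecidableEq H]
    (G : HRLQ R H) (hq : ∀ h, G.uq h = 1) [∀ r, DecidableRel (G.rp r)]
    [∀ h, DecidableRel (G.hp h)] {M : R → Option H} (hM : IsMatching G M) {μ : H → Option R}
    (hμ : ∀ h, assigned M h = (μ h).toFinset) (α : R → ℤ) (β : H → ℤ)
    (hsum : ∑ r, α r + ∑ h, β h ≤ 0)
    (hr : ∀ r, 0 ≤ vote (G.rp r) (M r) none + α r)
    (hh : ∀ h, 0 ≤ vote (G.hp h) (μ h) none + β h)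
    (he : ∀ r h, (r, h) ∈ G.E →
      0 ≤ vote (G.rp r) (M r) (some h) + α r + (vote (G.hp h) (μ h) (some r) + β h)) :
    Popular G M := by
  refine ⟨hM, fun M' P hM' hP => not_lt.mpr ?_⟩
  choose μ' hμ' using fun h => exists_assigned_eq_toFinset hM' (hq h)
  have hpartner : ∀ h r, μ' h = some r ↔ M' r = some h := fun h r => by
    rw [← Option.mem_def, ← Option.mem_toFinset, ← hμ', mem_assigned]
  have hcert := Finset.sum_apply_add_sum_apply_nonneg hpartner
    (fun r o => vote (G.rp r) (M r) o + α r) (fun h o => vote (G.hp h) (μ h) o + β h)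
    hr hh fun r h hrh => he r h (hM'.1 r h hrh)
  simp only [Finset.sum_add_distrib] at hcert
  rw [totalVote_eq_sum_vote G hq hM hM' hμ hμ' hP]
  linarith

namespace Example

abbrev resPref (r h h' : Fin 4) : Prop :=
  (r = 0 ∧ h = 0 ∧ h' = 1) ∨ (r = 2 ∧ h = 2 ∧ h' = 3) ∨ (r = 3 ∧ h = 3 ∧ h' = 2)

abbrev hospPref (h r r' : Fin 4) : Prop :=
  (h = 0 ∧ r = 0 ∧ r' = 1) ∨ (h = 2 ∧ r = 3 ∧ r' = 2) ∨ (h = 3 ∧ r = 2 ∧ r' = 3)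

def edges : Finset (Fin 4 × Fin 4) := {(0, 0), (0, 1), (1, 0), (2, 2), (2, 3), (3, 2), (3, 3)}

theorem resPref_total : ∀ r h₁ h₂ : Fin 4, (r, h₁) ∈ edges → (r, h₂) ∈ edges →
    h₁ = h₂ ∨ resPref r h₁ h₂ ∨ resPref r h₂ h₁ := by
  decide

theorem hospPref_total : ∀ h r₁ r₂ : Fin 4, (r₁, h) ∈ edges → (r₂, h) ∈ edges →
    r₁ = r₂ ∨ hospPref h r₁ r₂ ∨ hospPref h r₂ r₁ := by
  decide

def inst : HRLQ (Fin 4) (Fin 4) where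
  E := edges
  rp := resPref
  hp := hospPref
  lq _ := 0
  uq _ := 1
  lq_le_uq _ := zero_le_one
  uq_pos _ := le_rfl
  rp_irrefl := by decide
  rp_trans := by decide
  rp_total r h₁ h₂ e₁ e₂ := (resPref_total r h₁ h₂ e₁ e₂).resolve_left
  hp_irrefl := by decide
  hp_trans := by decide
  hp_total h r₁ r₂ e₁ e₂ := (hospPref_total h r₁ r₂ e₁ e₂).resolve_left

instance (r : Fin 4) : DecidableRel (inst.rp r) := inferInstanceAs (DecidableRel (resPref r))
instance (h : Fin 4) : DecidableRel (inst.hp h) := inferInstanceAs (DecidableRel (hospPref h))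

def stableMatching : Fin 4 → Option (Fin 4) := ![some 0, none, some 2, some 3]
def popularMatching : Fin 4 → Option (Fin 4) := ![some 1, some 0, some 3, some 2]

theorem isMatching_stableMatching : IsMatching inst stableMatching := ⟨by decide, by decide⟩

theorem stable_stableMatching : Stable inst stableMatching := by
  unfold Stable Blocks BlocksIn WantsMore
  decide

-- The blocking edge `r₀h₀` is paid for by `r₁` and `h₁`, which lose their partners when it is used.
theorem popular_popularMatching : Popular inst popularMatching :=
  popular_of_certificate inst (fun _ => rfl) ⟨by decide, by decide⟩
    (μ := ![some 1, some 0, some 3, some 2]) (by decide) ![1, -1, 0, 0] ![1, -1, 0, 0]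
    (by decide) (by decide) (by decide) (by decide)

theorem msize_stableMatching_lt : msize stableMatching < msize popularMatching := by decide

theorem rank1Count_popularMatching_lt :
    rank1Count inst popularMatching < rank1Count inst stableMatching := by
  unfold rank1Count
  rw [Finset.filter_congr_decidable _ (Rank1 inst popularMatching),
    Finset.filter_congr_decidable _ (Rank1 inst stableMatching)]
  decide

theorem prefCount_popularMatching_lt :
    prefCount inst popularMatching stableMatching <
      prefCount inst stableMatching popularMatching := by
  simp only [prefCount, rvote_eq_vote]
  decide

end Example

end HRLQ

/-- There is an HR instance (all lower quotas `0`) in which every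
hospital has upper quota `1`, with a stable matching `Ms` and a popular matching `Mp`
such that `|Mp| > |Ms|`, strictly more residents are matched to their rank-1 hospital
in `Ms` than in `Mp`, and strictly more residents prefer `Ms` over `Mp` than prefer
`Mp` over `Ms`. -/
theorem statement11 :
    ∃ (n m : ℕ) (G : HRLQ (Fin n) (Fin m)) (Ms Mp : Fin n → Option (Fin m)),
      (∀ h, G.lq h = 0) ∧ (∀ h, G.uq h = 1) ∧
      HRLQ.IsMatching G Ms ∧ HRLQ.Stable G Ms ∧
      HRLQ.Popular G Mp ∧
      HRLQ.msize Ms < HRLQ.msize Mp ∧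
      HRLQ.rank1Count G Mp < HRLQ.rank1Count G Ms ∧
      HRLQ.prefCount G Mp Ms < HRLQ.prefCount G Ms Mp :=
  open HRLQ.Example in
  ⟨4, 4, inst, stableMatching, popularMatching, fun _ => rfl, fun _ => rfl,
    isMatching_stableMatching, stable_stableMatching, popular_popularMatching,
    msize_stableMatching_lt, rank1Count_popularMatching_lt, prefCount_popularMatching_lt⟩
end
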